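/- Let M ≥ 1 be an integer, let 0 < α < 1, and set δ̄ := ((1−α)/4)·(α/8)^M. Then there exist: closed intervals I_s ⊆ [−1,1] indexed by binary strings s with |s| ≤ M, with I_⊥ = [−1,1], satisfying (F-1) and (F-2); and, for every such string s and every vector δ ∈ (0, δ̄]^M, a function f_{s,δ} : [−1,1] → ℝ, depending only on the first |s| coordinates of δ, with f_{⊥,δ}(x) = |x|, each f_{s,δ} convex, continuous and Lipschitz with constant 1, such that, with the reals b_{l,δ} defined by b_{0,δ} = 1 and b_{l+1,δ} = b_{l,δ} − (α/2)·(α/8)^l − δ_{l+1}, the following hold: (G-4) f_{s,δ}(x) = b_{|s|,δ} − (α/8)^{|s|} + (α/2)^{|s|}·|x − c_s| for all x ∈ I_s, where c_s is the midpoint of I_s; (G-5) for every prefix t of s, f_{s,δ}(x) < b_{|t|,δ} if and only if x lies in the interior of I_t; and (G-3) for every strict prefix t of s there is a closed interval I_t^δ, depending only on t and on δ_1, …, δ_{|t|+1}, with I_{t0} ∪ I_{t1} contained in the interior of I_t^δ and I_t^δ contained in the interior of I_t, such that f_{s,δ} ≥ f_{t,δ} pointwise and f_{s,δ}(x) = f_{t,δ}(x)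 if and only if x lies outside the interior of I_t^δ. -/
import Mathlib

noncomputable section
namespace PNem

def lo : List Bool → ℝ
  | [] => -1
  | b :: s => lo s / 4 + (cond b 1 (-1)) / 4

def hi : List Bool → ℝ
  | [] => 1
  | b :: s => hi s / 4 + (cond b 1 (-1)) / 4

def mid (s : List Bool) : ℝ := (lo s + hi s) / 2
def hw (s : List Bool) : ℝ := (4:ℝ)⁻¹ ^ s.length

lemma hw_pos (s : List Bool) : 0 < hw s := pow_pos (by norm_num) _
lemma hw_cons (b : Bool) (s : List Bool) : hw (b :: s) = hw s / 4 := by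
  simp [hw, pow_succ]; ring

lemma hi_sub_lo (s : List Bool) : hi s - lo s = 2 * hw s := by
  induction s with
  | nil => simp [hi, lo, hw]; norm_num
  | cons b t ih => simp only [hi, lo, hw_cons]; linarith

lemma lo_le_hi (s : List Bool) : lo s ≤ hi s := by
  have := hi_sub_lo s; have := hw_pos s; linarith

lemma mid_cons (b : Bool) (s : List Bool) :
    mid (b :: s) = mid s / 4 + (cond b 1 (-1)) / 4 := by
  simp [mid, hi, lo]; ring

lemma lo_cons_eq (a : Bool) (s : List Bool) : lo (a :: s) = lo s / 4 + (cond a 1 (-1)) / 4 := rfl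
lemma hi_cons_eq (a : Bool) (s : List Bool) : hi (a :: s) = hi s / 4 + (cond a 1 (-1)) / 4 := rfl

lemma lo_concat (t : List Bool) (b : Bool) :
    lo (t ++ [b]) = mid t + (cond b 0 (-(hw t / 2))) ∧
    hi (t ++ [b]) = mid t + (cond b (hw t / 2) 0) := by
  induction t with
  | nil =>
    cases b <;> constructor <;> simp [lo, hi, mid, hw] <;> norm_num
  | cons a t ih =>
    obtain ⟨ih1, ih2⟩ := ih
    have e1 : (a :: t) ++ [b] = a :: (t ++ [b]) := rfl
    rw [e1, lo_cons_eq, hi_cons_eq, ih1, ih2, mid_cons, hw_cons]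
    cases b <;> constructor <;> simp <;> ring

lemma lo_concat_false (t : List Bool) : lo (t ++ [false]) = mid t - hw t / 2 := by
  have := (lo_concat t false).1; simpa [sub_eq_add_neg] using this
lemma hi_concat_false (t : List Bool) : hi (t ++ [false]) = mid t := by
  simpa using (lo_concat t false).2
lemma lo_concat_true (t : List Bool) : lo (t ++ [true]) = mid t := by
  simpa using (lo_concat t true).1
lemma hi_concat_true (t : List Bool) : hi (t ++ [true]) = mid t + hw t / 2 := by
  simpa using (lo_concat t true).2

lemma icc_subset_concat (t : List Bool) (b : Bool) :
    Set.Icc (lo (t ++ [b])) (hi (t ++ [b])) ⊆ Set.Icc (lo t) (hi t) := by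
  have h2 := hi_sub_lo t
  have h3 := hw_pos t
  cases b <;>
    · apply Set.Icc_subset_Icc <;>
      simp only [lo_concat_false, hi_concat_false, lo_concat_true, hi_concat_true, mid] <;>
      linarith

lemma icc_subset_prefix {t s : List Bool} (h : t <+: s) :
    Set.Icc (lo s) (hi s) ⊆ Set.Icc (lo t) (hi t) := by
  induction s using List.reverseRecOn with
  | nil => have : t = [] := List.prefix_nil.mp h; simp [this]
  | append_singleton s b ih =>
    rcases List.prefix_concat_iff.mp h with h' | h'
    · simp [h']
    · exact (icc_subset_concat s b).trans (ih h')


lemma mem_icc_iff (s : List Bool) (x : ℝ) :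
    x ∈ Set.Icc (lo s) (hi s) ↔ |x - mid s| ≤ hw s := by
  have h := hi_sub_lo s
  rw [Set.mem_Icc, abs_le, mid]
  constructor <;> intro ⟨h1, h2⟩ <;> constructor <;> linarith

lemma mem_ioo_iff (s : List Bool) (x : ℝ) :
    x ∈ Set.Ioo (lo s) (hi s) ↔ |x - mid s| < hw s := by
  have h := hi_sub_lo s
  rw [Set.mem_Ioo, abs_lt, mid]
  constructor <;> intro ⟨h1, h2⟩ <;> constructor <;> linarith

lemma exists_split {s t : List Bool} (hs : ¬ s <+: t) (ht : ¬ t <+: s) :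
    ∃ u b, (u ++ [b]) <+: s ∧ (u ++ [!b]) <+: t := by
  induction s generalizing t with
  | nil => exact absurd (List.nil_prefix) hs
  | cons x s' ih =>
    cases t with
    | nil => exact absurd (List.nil_prefix) ht
    | cons y t' =>
      by_cases hxy : x = y
      · subst hxy
        have hs' : ¬ s' <+: t' := fun h => hs (List.cons_prefix_cons.mpr ⟨rfl, h⟩)
        have ht' : ¬ t' <+: s' := fun h => ht (List.cons_prefix_cons.mpr ⟨rfl, h⟩)
        obtain ⟨u, b, h1, h2⟩ := ih hs' ht'
        exact ⟨x :: u, b, List.cons_prefix_cons.mpr ⟨rfl, h1⟩,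
          List.cons_prefix_cons.mpr ⟨rfl, h2⟩⟩
      · have hb : (!x) = y := by revert hxy; cases x <;> cases y <;> simp
        refine ⟨[], x, ?_, ?_⟩
        · exact List.cons_prefix_cons.mpr ⟨rfl, List.nil_prefix⟩
        · rw [List.nil_append]
          exact List.cons_prefix_cons.mpr ⟨hb, List.nil_prefix⟩

lemma disjoint_incomp {s t : List Bool} (hs : ¬ s <+: t) (ht : ¬ t <+: s) :
    Set.Ioo (lo s) (hi s) ∩ Set.Ioo (lo t) (hi t) = ∅ := by
  obtain ⟨u, b, h1, h2⟩ := exists_split hs ht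
  have key : ∀ (v w : List Bool), (u ++ [false]) <+: v → (u ++ [true]) <+: w →
      Set.Ioo (lo v) (hi v) ∩ Set.Ioo (lo w) (hi w) = ∅ := by
    intro v w hv hw
    have hv' := icc_subset_prefix hv
    have hw' := icc_subset_prefix hw
    ext x
    simp only [Set.mem_inter_iff, Set.mem_Ioo, Set.mem_empty_iff_false, iff_false, not_and]
    rintro ⟨hx1, hx2⟩ hx3 hx4
    have hxv : hi v ≤ mid u := by
      have := (hv' ⟨lo_le_hi v, le_refl (hi v)⟩).2
      rwa [hi_concat_false] at this
    have hxw : mid u ≤ lo w := by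
      have := (hw' ⟨le_refl (lo w), lo_le_hi w⟩).1
      rwa [lo_concat_true] at this
    linarith
  cases b
  · exact key s t h1 (by simpa using h2)
  · rw [Set.inter_comm]; exact key t s (by simpa using h2) h1


/-! ### The functions -/

def blv (α : ℝ) (δv : ℕ → ℝ) (l : ℕ) : ℝ :=
  1 - ∑ i ∈ Finset.range l, (α / 2 * (α / 8) ^ i + δv i)

def slp (α : ℝ) (s : List Bool) : ℝ := (α / 2) ^ s.length

def V (α : ℝ) (δv : ℕ → ℝ) (s : List Bool) (x : ℝ) : ℝ :=
  blv α δv s.length - (α / 8) ^ s.length + slp α s * |x - mid s|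

def eps (α : ℝ) (δv : ℕ → ℝ) (s : List Bool) : ℝ :=
  δv s.length / (slp α s * (1 - α / 2))

def rad (α : ℝ) (δv : ℕ → ℝ) (s : List Bool) : ℝ := hw s - eps α δv s

def Sf (α : ℝ) (δv : ℕ → ℝ) (s : List Bool) (x : ℝ) : ℝ :=
  blv α δv s.length - slp α s * eps α δv s +
    slp α s * (1 - (1 - α) / 8) * (|x - mid s| - rad α δv s)

def f (α : ℝ) (δv : ℕ → ℝ) (s : List Bool) (x : ℝ) : ℝ :=
  if h : s = [] then |x|
  else max (f α δv s.dropLast x) (max (Sf α δv s.dropLast x) (V α δv s x))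
termination_by s.length
decreasing_by
  have : 0 < s.length := List.length_pos_iff.mpr h
  simp only [List.length_dropLast]; omega

lemma f_nil (α : ℝ) (δv : ℕ → ℝ) (x : ℝ) : f α δv [] x = |x| := by
  rw [f]; simp

lemma f_concat (α : ℝ) (δv : ℕ → ℝ) (t : List Bool) (b : Bool) (x : ℝ) :
    f α δv (t ++ [b]) x =
      max (f α δv t x) (max (Sf α δv t x) (V α δv (t ++ [b]) x)) := by
  rw [f]
  simp [List.dropLast_concat]

lemma blv_zero (α : ℝ) (δv : ℕ → ℝ) : blv α δv 0 = 1 := by simp [blv]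

lemma blv_succ (α : ℝ) (δv : ℕ → ℝ) (l : ℕ) :
    blv α δv (l + 1) = blv α δv l - α / 2 * (α / 8) ^ l - δv l := by
  simp [blv, Finset.sum_range_succ]; ring

/-- admissible perturbation sizes -/
def Dok (α : ℝ) (δv : ℕ → ℝ) : Prop :=
  ∀ n, 0 < δv n ∧ δv n ≤ (1 - α) / 4 * (α / 8) ^ (n + 1)

lemma blv_mono {α : ℝ} {δv : ℕ → ℝ} (hα0 : 0 < α) (hD : Dok α δv) {j l : ℕ}
    (h : j ≤ l) : blv α δv l ≤ blv α δv j := by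
  induction l with
  | zero => have : j = 0 := by omega
            simp [this]
  | succ n ih =>
    rcases Nat.lt_or_ge j (n+1) with h' | h'
    · have := ih (by omega)
      have h1 := (hD n).1
      have h2 : (0:ℝ) < α / 2 * (α / 8) ^ n := by positivity
      rw [blv_succ]; linarith
    · have : j = n + 1 := by omega
      simp [this]

lemma slp_pos {α : ℝ} (hα0 : 0 < α) (s : List Bool) : 0 < slp α s :=
  pow_pos (by linarith) _

lemma slp_le_one {α : ℝ} (hα0 : 0 < α) (hα1 : α < 1) (s : List Bool) : slp α s ≤ 1 :=
  pow_le_one₀ (by linarith) (by linarith)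

lemma hw_le_one (s : List Bool) : hw s ≤ 1 :=
  pow_le_one₀ (by norm_num) (by norm_num)

lemma a_eq {α : ℝ} (s : List Bool) : (α / 8) ^ s.length = slp α s * hw s := by
  rw [slp, hw, ← mul_pow]; congr 1; ring

lemma len_concat (t : List Bool) (b : Bool) : (t ++ [b]).length = t.length + 1 := by
  simp

/-- key size bounds on `eps` -/
lemma eps_bounds {α : ℝ} {δv : ℕ → ℝ} (hα0 : 0 < α) (hα1 : α < 1) (hD : Dok α δv)
    (s : List Bool) :
    0 < eps α δv s ∧ 16 * eps α δv s ≤ (1 - α) * hw s := by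
  have hL := slp_pos hα0 s
  have hh := hw_pos s
  have h2 : (0:ℝ) < 1 - α / 2 := by linarith
  have hden : 0 < slp α s * (1 - α / 2) := by positivity
  obtain ⟨hd1, hd2⟩ := hD s.length
  constructor
  · exact div_pos hd1 hden
  · have e1 : (α / 8) ^ (s.length + 1) = α / 8 * (slp α s * hw s) := by
      rw [pow_succ, a_eq]; ring
    have hd2' : δv s.length ≤ (1 - α) / 4 * (α / 8 * (slp α s * hw s)) := by
      rw [e1] at hd2; exact hd2
    rw [eps, ← mul_div_assoc, div_le_iff₀ hden]
    nlinarith [hd2', mul_nonneg (mul_nonneg (sq_nonneg (1 - α)) hL.le) hh.le]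


/-! ### step context lemmas -/

lemma slp_concat (α : ℝ) (t : List Bool) (b : Bool) :
    slp α (t ++ [b]) = α / 2 * slp α t := by
  rw [slp, slp, len_concat, pow_succ]; ring

lemma hw_concat (t : List Bool) (b : Bool) : hw (t ++ [b]) = hw t / 4 := by
  rw [hw, hw, len_concat, pow_succ]; ring

lemma mid_concat (t : List Bool) (b : Bool) :
    mid (t ++ [b]) = mid t + (cond b (hw t / 4) (-(hw t / 4))) := by
  cases b <;>
    simp only [mid, lo_concat_false, hi_concat_false, lo_concat_true, hi_concat_true,
      cond_true, cond_false] <;> ring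

lemma delta_eq {α : ℝ} (hα0 : 0 < α) (hα1 : α < 1) (δv : ℕ → ℝ) (t : List Bool) :
    δv t.length = slp α t * (1 - α / 2) * eps α δv t := by
  have hden : slp α t * (1 - α / 2) ≠ 0 :=
    (mul_pos (slp_pos hα0 t) (by linarith)).ne'
  rw [eps, mul_comm]
  exact (div_mul_cancel₀ _ hden).symm

lemma V_eq (α : ℝ) (δv : ℕ → ℝ) (s : List Bool) (x : ℝ) :
    V α δv s x = blv α δv s.length - slp α s * hw s + slp α s * |x - mid s| := by
  rw [V, a_eq]

lemma sublevel_iff {α : ℝ} (hα0 : 0 < α) (δv : ℕ → ℝ) (s : List Bool) (x : ℝ) :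
    V α δv s x < blv α δv s.length ↔ |x - mid s| < hw s := by
  have hL := slp_pos hα0 s
  rw [V_eq]
  constructor <;> intro h <;> nlinarith

lemma eps_le_hw {α : ℝ} {δv : ℕ → ℝ} (hα0 : 0 < α) (hα1 : α < 1) (hD : Dok α δv)
    (t : List Bool) : 16 * eps α δv t ≤ hw t := by
  obtain ⟨hε0, hε16⟩ := eps_bounds hα0 hα1 hD t
  nlinarith [mul_nonneg hα0.le hε0.le]

/-! ### core pointwise inequalities for one refinement step -/

section Core
variable {α : ℝ} {δv : ℕ → ℝ} (hα0 : 0 < α) (hα1 : α < 1) (hD : Dok α δv)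
  (t : List Bool) (x : ℝ)

include hα0 hα1 hD

lemma S_le_V_out (hx : rad α δv t ≤ |x - mid t|) : Sf α δv t x ≤ V α δv t x := by
  obtain ⟨hε0, hε16⟩ := eps_bounds hα0 hα1 hD t
  have hL := slp_pos hα0 t
  rw [Sf, V_eq, rad] at *
  nlinarith [mul_nonneg (mul_nonneg hL.le (by linarith : (0:ℝ) ≤ (1 - α) / 8))
    (by linarith : 0 ≤ |x - mid t| - (hw t - eps α δv t))]

lemma V_lt_S_in (hx : |x - mid t| < rad α δv t) : V α δv t x < Sf α δv t x := by
  obtain ⟨hε0, hε16⟩ := eps_bounds hα0 hα1 hD t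
  have hL := slp_pos hα0 t
  rw [Sf, V_eq, rad] at *
  nlinarith [mul_pos (mul_pos hL (by linarith : (0:ℝ) < (1 - α) / 8))
    (by linarith : 0 < hw t - eps α δv t - |x - mid t|)]

lemma S_inP (hx : |x - mid t| ≤ rad α δv t) :
    Sf α δv t x ≤ blv α δv t.length - slp α t * eps α δv t := by
  obtain ⟨hε0, hε16⟩ := eps_bounds hα0 hα1 hD t
  have hL := slp_pos hα0 t
  rw [Sf]
  nlinarith [mul_nonneg (mul_nonneg hL.le (by linarith : (0:ℝ) ≤ 1 - (1 - α) / 8))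
    (by linarith : 0 ≤ rad α δv t - |x - mid t|)]

lemma V_child_inP (b : Bool) (hx : |x - mid t| ≤ rad α δv t) :
    V α δv (t ++ [b]) x ≤ blv α δv t.length - δv t.length := by
  obtain ⟨hε0, hε16⟩ := eps_bounds hα0 hα1 hD t
  have hL := slp_pos hα0 t
  have hh := hw_pos t
  have htri : |x - mid (t ++ [b])| ≤ |x - mid t| + hw t / 4 := by
    have : x - mid (t ++ [b]) = (x - mid t) - (cond b (hw t / 4) (-(hw t / 4))) := by
      rw [mid_concat]; ring
    rw [this]
    refine (abs_sub _ _).trans ?_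
    cases b <;> simp [abs_of_nonneg, abs_of_nonpos, hh.le] <;>
      rw [abs_of_nonneg (by linarith)]
  rw [V_eq, slp_concat, hw_concat, len_concat, blv_succ, a_eq,
    delta_eq hα0 hα1 δv t]
  rw [rad] at hx
  nlinarith [mul_nonneg (mul_nonneg (by linarith : (0:ℝ) ≤ α/2) hL.le) hε0.le,
    mul_nonneg (mul_nonneg (by linarith : (0:ℝ) ≤ α/2) hL.le)
      (by linarith [htri] : 0 ≤ |x - mid t| + hw t / 4 - |x - mid (t ++ [b])|)]


lemma V_child_le_V_out (b : Bool)
    (hx : x ≤ mid t - rad α δv t ∨ mid t + rad α δv t ≤ x) :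
    V α δv (t ++ [b]) x ≤ V α δv t x := by
  obtain ⟨hε0, hε16⟩ := eps_bounds hα0 hα1 hD t
  have h16 := eps_le_hw hα0 hα1 hD t
  have hL := slp_pos hα0 t
  have hh := hw_pos t
  rw [V_eq α δv (t ++ [b]) x, V_eq α δv t x, slp_concat, hw_concat, len_concat,
    blv_succ, a_eq, delta_eq hα0 hα1 δv t, mid_concat, rad] at *
  have key1 : (0:ℝ) ≤ slp α t * (1 - α/2) := by nlinarith
  have key3 : (0:ℝ) ≤ α * (slp α t * hw t) := by positivity
  rcases hx with hx | hx
  · rw [abs_of_nonpos (by cases b <;> simp at hx ⊢ <;> nlinarith),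
      abs_of_nonpos (by cases b <;> simp at hx ⊢ <;> nlinarith)]
    have key2 : (0:ℝ) ≤ slp α t * (1 - α/2) * ((mid t - x) - (hw t - eps α δv t)) := by
      apply mul_nonneg key1; cases b <;> simp at hx ⊢ <;> nlinarith
    cases b <;> simp at hx ⊢ <;> nlinarith
  · rw [abs_of_nonneg (by cases b <;> simp at hx ⊢ <;> nlinarith),
      abs_of_nonneg (by cases b <;> simp at hx ⊢ <;> nlinarith)]
    have key2 : (0:ℝ) ≤ slp α t * (1 - α/2) * ((x - mid t) - (hw t - eps α δv t)) := by
      apply mul_nonneg key1; cases b <;> simp at hx ⊢ <;> nlinarith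
    cases b <;> simp at hx ⊢ <;> nlinarith


lemma V_le_V_child_on (b : Bool) (hx : |x - mid (t ++ [b])| ≤ hw t / 4) :
    V α δv t x ≤ V α δv (t ++ [b]) x := by
  obtain ⟨hε0, hε16⟩ := eps_bounds hα0 hα1 hD t
  have h16 := eps_le_hw hα0 hα1 hD t
  have hL := slp_pos hα0 t
  have hh := hw_pos t
  rw [V_eq α δv (t ++ [b]) x, V_eq α δv t x, slp_concat, hw_concat, len_concat,
    blv_succ, a_eq, delta_eq hα0 hα1 δv t, mid_concat] at *
  have key1 : (0:ℝ) ≤ slp α t * (1 - α/2) := by nlinarith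
  have key2 : (0:ℝ) ≤ slp α t * (1 + α/2) := by nlinarith
  have sc1 : (0:ℝ) ≤ slp α t * ((3/4 - 5*α/8) * hw t - (1 - α/2) * eps α δv t) := by
    apply mul_nonneg hL.le
    nlinarith [mul_nonneg hα0.le hε0.le, mul_nonneg hα0.le hh.le]
  have sc2 : (0:ℝ) ≤ slp α t * ((1-α)/2 * hw t - (1 - α/2) * eps α δv t) := by
    apply mul_nonneg hL.le; nlinarith [mul_nonneg hα0.le hε0.le]
  cases b <;> simp only [cond_true, cond_false] at hx ⊢ <;>
    obtain ⟨hx1, hx2⟩ := abs_le.mp hx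
  · -- left child : x ∈ [c - h/2, c]
    rw [abs_of_nonpos (by linarith : x - mid t ≤ 0)]
    rcases le_total x (mid t + -(hw t / 4)) with hs | hs
    · rw [abs_of_nonpos (by linarith)]
      nlinarith [mul_nonneg key2 (by linarith : (0:ℝ) ≤ x - (mid t - hw t / 2))]
    · rw [abs_of_nonneg (by linarith)]
      nlinarith [mul_nonneg key1 (by linarith : (0:ℝ) ≤ x - (mid t - hw t / 4))]
  · -- right child : x ∈ [c, c + h/2]
    rw [abs_of_nonneg (by linarith : (0:ℝ) ≤ x - mid t)]
    rcases le_total x (mid t + hw t / 4) with hs | hs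
    · rw [abs_of_nonpos (by linarith)]
      nlinarith [mul_nonneg key2 (by linarith : (0:ℝ) ≤ mid t + hw t / 4 - x)]
    · rw [abs_of_nonneg (by linarith)]
      nlinarith [mul_nonneg key1 (by linarith : (0:ℝ) ≤ mid t + hw t / 2 - x)]

lemma S_le_V_child_on (b : Bool) (hx : |x - mid (t ++ [b])| ≤ hw t / 4) :
    Sf α δv t x ≤ V α δv (t ++ [b]) x := by
  obtain ⟨hε0, hε16⟩ := eps_bounds hα0 hα1 hD t
  have h16 := eps_le_hw hα0 hα1 hD t
  have hL := slp_pos hα0 t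
  have hh := hw_pos t
  rw [Sf, V_eq α δv (t ++ [b]) x, slp_concat, hw_concat, len_concat,
    blv_succ, a_eq, delta_eq hα0 hα1 δv t, mid_concat, rad] at *
  have key2 : (0:ℝ) ≤ slp α t * ((1 - (1-α)/8) + α/2) := by nlinarith
  have key4 : (0:ℝ) ≤ slp α t * ((1 - (1-α)/8) - α/2) := by nlinarith
  have sc1 : (0:ℝ) ≤ slp α t * (eps α δv t + (1 - (1-α)/8) * (3 * hw t/4 - eps α δv t)
      - 5*α/8 * hw t - (1 - α/2) * eps α δv t) := by
    apply mul_nonneg hL.le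
    nlinarith [mul_nonneg hα0.le hε0.le, mul_nonneg hα0.le hh.le]
  have sc2 : (0:ℝ) ≤ slp α t * (eps α δv t + (1 - (1-α)/8) * (hw t/2 - eps α δv t)
      - α/2 * hw t - (1 - α/2) * eps α δv t) := by
    apply mul_nonneg hL.le
    nlinarith [mul_nonneg hα0.le hε0.le, mul_nonneg hα0.le hh.le]
  cases b <;> simp only [cond_true, cond_false] at hx ⊢ <;>
    obtain ⟨hx1, hx2⟩ := abs_le.mp hx
  · rw [abs_of_nonpos (by linarith : x - mid t ≤ 0)]
    rcases le_total x (mid t + -(hw t / 4)) with hs | hs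
    · rw [abs_of_nonpos (by linarith)]
      nlinarith [mul_nonneg key2 (by linarith : (0:ℝ) ≤ x - (mid t - hw t / 2)), sc1]
    · rw [abs_of_nonneg (by linarith)]
      nlinarith [mul_nonneg key4 (by linarith : (0:ℝ) ≤ x - (mid t - hw t / 4)), sc2]
  · rw [abs_of_nonneg (by linarith : (0:ℝ) ≤ x - mid t)]
    rcases le_total x (mid t + hw t / 4) with hs | hs
    · rw [abs_of_nonpos (by linarith)]
      nlinarith [mul_nonneg key2 (by linarith : (0:ℝ) ≤ mid t + hw t / 4 - x), sc1]
    · rw [abs_of_nonneg (by linarith)]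
      nlinarith [mul_nonneg key4 (by linarith : (0:ℝ) ≤ mid t + hw t / 2 - x), sc2]

end Core

/-! ### structural lemmas -/

lemma mem_ioo_ball {x c r : ℝ} : x ∈ Set.Ioo (c - r) (c + r) ↔ |x - c| < r := by
  rw [Set.mem_Ioo, abs_lt]
  constructor <;> rintro ⟨h1, h2⟩ <;> constructor <;> linarith

lemma mem_icc_ball {x c r : ℝ} : x ∈ Set.Icc (c - r) (c + r) ↔ |x - c| ≤ r := by
  rw [Set.mem_Icc, abs_le]
  constructor <;> rintro ⟨h1, h2⟩ <;> constructor <;> linarith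

lemma V_nil (α : ℝ) (δv : ℕ → ℝ) (x : ℝ) : V α δv [] x = |x| := by
  simp [V, blv, slp, mid, lo, hi]

lemma V_le_f (α : ℝ) (δv : ℕ → ℝ) (s : List Bool) (x : ℝ) :
    V α δv s x ≤ f α δv s x := by
  induction s using List.reverseRecOn with
  | nil => rw [V_nil, f_nil]
  | append_singleton t b ih =>
    rw [f_concat]
    exact le_max_of_le_right (le_max_right _ _)

lemma f_prefix_mono {t s : List Bool} (h : t <+: s) (α : ℝ) (δv : ℕ → ℝ) (x : ℝ) :
    f α δv t x ≤ f α δv s x := by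
  induction s using List.reverseRecOn with
  | nil => rw [List.prefix_nil.mp h]
  | append_singleton s' b ih =>
    rcases List.prefix_concat_iff.mp h with h' | h'
    · rw [h']
    · exact (ih h').trans (by rw [f_concat]; exact le_max_left _ _)

lemma exists_next {t s : List Bool} (h : t <+: s) (hne : t ≠ s) :
    ∃ b, t ++ [b] <+: s := by
  obtain ⟨r, rfl⟩ := h
  cases r with
  | nil => simp at hne
  | cons b r' => exact ⟨b, ⟨r', by simp⟩⟩

section Main
variable {α : ℝ} {δv : ℕ → ℝ} (hα0 : 0 < α) (hα1 : α < 1) (hD : Dok α δv)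

include hα0 hα1 hD

/-- (G-4) -/
lemma f_eq_V_on (s : List Bool) (x : ℝ) (hx : x ∈ Set.Icc (lo s) (hi s)) :
    f α δv s x = V α δv s x := by
  induction s using List.reverseRecOn with
  | nil => rw [V_nil, f_nil]
  | append_singleton t b ih =>
    have hxt := icc_subset_concat t b hx
    have hx' : |x - mid (t ++ [b])| ≤ hw t / 4 := by
      have := (mem_icc_iff (t ++ [b]) x).mp hx
      rwa [hw_concat] at this
    rw [f_concat, ih hxt, max_eq_right (S_le_V_child_on hα0 hα1 hD t x b hx'),
      max_eq_right (V_le_V_child_on hα0 hα1 hD t x b hx')]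

lemma blv_le_V_out (s : List Bool) (x : ℝ) (hx : hw s ≤ |x - mid s|) :
    blv α δv s.length ≤ V α δv s x := by
  have hL := slp_pos hα0 s
  rw [V_eq]
  nlinarith

/-- (G-5) -/
lemma f_lt_blv_iff {t s : List Bool} (h : t <+: s) (x : ℝ) :
    f α δv s x < blv α δv t.length ↔ |x - mid t| < hw t := by
  constructor
  · intro hf
    by_contra hc
    push_neg at hc
    exact absurd (lt_of_le_of_lt
      ((blv_le_V_out hα0 hα1 hD t x hc).trans
        ((V_le_f α δv t x).trans (f_prefix_mono h α δv x))) hf) (lt_irrefl _)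
  · intro hx
    induction s using List.reverseRecOn with
    | nil =>
      rw [List.prefix_nil.mp h] at hx ⊢
      rw [f_nil]
      have := (sublevel_iff hα0 δv [] x).mpr hx
      rwa [V_nil] at this
    | append_singleton s' b ih =>
      rcases List.prefix_concat_iff.mp h with h' | h'
      · subst h'
        have hmem : x ∈ Set.Icc (lo (s' ++ [b])) (hi (s' ++ [b])) :=
          (mem_icc_iff _ x).mpr hx.le
        rw [f_eq_V_on hα0 hα1 hD _ x hmem]
        exact (sublevel_iff hα0 δv _ x).mpr hx
      · have hlen : t.length ≤ s'.length := h'.length_le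
        have hmono := blv_mono hα0 hD hlen
        have hf' := ih h'
        rw [f_concat]
        have hL := slp_pos hα0 s'
        obtain ⟨hε0, hε16⟩ := eps_bounds hα0 hα1 hD s'
        have hδ0 := (hD s'.length).1
        rcases le_or_gt (|x - mid s'|) (rad α δv s') with hin | hout
        · have h1 := S_inP hα0 hα1 hD s' x hin
          have h2 := V_child_inP hα0 hα1 hD s' x b hin
          have h3 : 0 < slp α s' * eps α δv s' := mul_pos hL hε0
          refine max_lt hf' (max_lt ?_ ?_) <;> linarith
        · have hdis : x ≤ mid s' - rad α δv s' ∨ mid s' + rad α δv s' ≤ x := by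
            rcases le_total x (mid s') with h' | h'
            · left; rw [abs_of_nonpos (by linarith)] at hout; linarith
            · right; rw [abs_of_nonneg (by linarith)] at hout; linarith
          have h1 := (S_le_V_out hα0 hα1 hD s' x (le_of_lt hout)).trans (V_le_f α δv s' x)
          have h2 := (V_child_le_V_out hα0 hα1 hD s' x b hdis).trans (V_le_f α δv s' x)
          exact max_lt hf' (max_lt (lt_of_le_of_lt h1 hf') (lt_of_le_of_lt h2 hf'))

/-- the child interval sits inside the perturbed open interval -/
lemma child_subset_P (t : List Bool) (b : Bool) :
    Set.Icc (lo (t ++ [b])) (hi (t ++ [b])) ⊆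
      Set.Ioo (mid t - rad α δv t) (mid t + rad α δv t) := by
  intro x hx
  have hx' : |x - mid (t ++ [b])| ≤ hw t / 4 := by
    have := (mem_icc_iff (t ++ [b]) x).mp hx
    rwa [hw_concat] at this
  have h16 := eps_le_hw hα0 hα1 hD t
  obtain ⟨hε0, _⟩ := eps_bounds hα0 hα1 hD t
  have hh := hw_pos t
  rw [mem_ioo_ball]
  have htri : |x - mid t| ≤ |x - mid (t ++ [b])| + hw t / 4 := by
    have e : x - mid t = (x - mid (t ++ [b])) + (cond b (hw t / 4) (-(hw t / 4))) := by
      rw [mid_concat]; ring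
    rw [e]
    refine (abs_add_le _ _).trans ?_
    cases b <;> simp [abs_of_nonneg, abs_of_nonpos, hh.le] <;>
      rw [abs_of_nonneg (by linarith)]
  rw [rad]; linarith

lemma P_subset_I (t : List Bool) :
    Set.Icc (mid t - rad α δv t) (mid t + rad α δv t) ⊆
      Set.Ioo (lo t) (hi t) := by
  intro x hx
  obtain ⟨hε0, _⟩ := eps_bounds hα0 hα1 hD t
  rw [mem_icc_ball] at hx
  rw [mem_ioo_iff]
  rw [rad] at hx
  linarith

/-- (G-3), equality outside -/
lemma f_eq_outside {t s : List Bool} (h : t <+: s) (x : ℝ)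
    (hx : x ∉ Set.Ioo (mid t - rad α δv t) (mid t + rad α δv t)) :
    f α δv s x = f α δv t x := by
  have hxr : rad α δv t ≤ |x - mid t| := by
    by_contra hc; push_neg at hc; exact hx (mem_ioo_ball.mpr hc)
  induction s using List.reverseRecOn with
  | nil => rw [List.prefix_nil.mp h]
  | append_singleton s' b ih =>
    rcases List.prefix_concat_iff.mp h with h' | h'
    · rw [h']
    · have hfs' := ih h'
      rw [f_concat, hfs']
      rcases eq_or_ne t s' with rfl | hne
      · have hdis : x ≤ mid t - rad α δv t ∨ mid t + rad α δv t ≤ x := by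
          rcases le_total x (mid t) with h'' | h''
          · left; rw [abs_of_nonpos (by linarith)] at hxr; linarith
          · right; rw [abs_of_nonneg (by linarith)] at hxr; linarith
        have h1 := (S_le_V_out hα0 hα1 hD t x hxr).trans (V_le_f α δv t x)
        have h2 := (V_child_le_V_out hα0 hα1 hD t x b hdis).trans (V_le_f α δv t x)
        rw [max_eq_left (max_le h1 h2)]
      · -- t is a proper prefix of s' : x is far outside I_{s'}
        obtain ⟨b0, hb0⟩ := exists_next h' hne
        have hchain : Set.Icc (mid s' - rad α δv s') (mid s' + rad α δv s') ⊆
            Set.Ioo (mid t - rad α δv t) (mid t + rad α δv t) := by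
          refine ((P_subset_I hα0 hα1 hD s').trans ?_).trans
            ((icc_subset_prefix hb0).trans (child_subset_P hα0 hα1 hD t b0))
          exact Set.Ioo_subset_Icc_self
        have hxout : rad α δv s' ≤ |x - mid s'| := by
          by_contra hc; push_neg at hc
          exact hx (hchain (mem_icc_ball.mpr hc.le))
        have hdis : x ≤ mid s' - rad α δv s' ∨ mid s' + rad α δv s' ≤ x := by
          rcases le_total x (mid s') with h'' | h''
          · left; rw [abs_of_nonpos (by linarith)] at hxout; linarith
          · right; rw [abs_of_nonneg (by linarith)] at hxout; linarith
        have h1 := (S_le_V_out hα0 hα1 hD s' x hxout).trans (V_le_f α δv s' x)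
        have h2 := (V_child_le_V_out hα0 hα1 hD s' x b hdis).trans (V_le_f α δv s' x)
        rw [← hfs']
        exact max_eq_left (max_le h1 h2)

/-- (G-3), strict inequality inside -/
lemma f_lt_inside {t s : List Bool} (h : t <+: s) (hne : t ≠ s) (x : ℝ)
    (hx : x ∈ Set.Ioo (mid t - rad α δv t) (mid t + rad α δv t)) :
    f α δv t x < f α δv s x := by
  obtain ⟨b0, hb0⟩ := exists_next h hne
  have hxr : |x - mid t| < rad α δv t := mem_ioo_ball.mp hx
  obtain ⟨hε0, _⟩ := eps_bounds hα0 hα1 hD t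
  have hmem : x ∈ Set.Icc (lo t) (hi t) := by
    rw [mem_icc_iff]; rw [rad] at hxr; linarith
  have h1 : f α δv t x < Sf α δv t x := by
    rw [f_eq_V_on hα0 hα1 hD t x hmem]
    exact V_lt_S_in hα0 hα1 hD t x hxr
  refine h1.trans_le (le_trans ?_ (f_prefix_mono hb0 α δv x))
  rw [f_concat]
  exact le_max_of_le_right (le_max_left _ _)

end Main

/-! ### regularity -/

lemma convex_absLin (C K c : ℝ) (hK : 0 ≤ K) :
    ConvexOn ℝ Set.univ (fun x : ℝ => C + K * |x - c|) := by
  have h1 : ConvexOn ℝ Set.univ (fun x : ℝ => dist x c) :=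
    convexOn_univ_dist c
  have h2 := (h1.smul hK).add (convexOn_const C convex_univ)
  have he : (fun x : ℝ => C + K * |x - c|) =
      fun x : ℝ => K • dist x c + C := by
    funext x; rw [Real.dist_eq]; simp [smul_eq_mul]; ring
  rw [he]; exact h2

lemma lipschitz_absLin (C K c : ℝ) (hK0 : 0 ≤ K) (hK1 : K ≤ 1) :
    LipschitzWith 1 (fun x : ℝ => C + K * |x - c|) := by
  apply LipschitzWith.of_dist_le_mul
  intro x y
  rw [Real.dist_eq, Real.dist_eq]
  have h0 : C + K * |x - c| - (C + K * |y - c|) = K * (|x - c| - |y - c|) := by ring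
  rw [h0, abs_mul, abs_of_nonneg hK0]
  have h1 : |(|x - c| - |y - c|)| ≤ |x - y| := by
    have := abs_abs_sub_abs_le_abs_sub (x - c) (y - c)
    simpa using this
  calc K * |(|x - c| - |y - c|)| ≤ 1 * |x - y| := by
        apply mul_le_mul hK1 h1 (abs_nonneg _) zero_le_one
    _ = ↑(1 : NNReal) * |x - y| := by norm_num

lemma V_shape (α : ℝ) (δv : ℕ → ℝ) (s : List Bool) :
    (fun x => V α δv s x) = fun x =>
      (blv α δv s.length - (α/8)^s.length) + slp α s * |x - mid s| := by
  funext x; rw [V]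

lemma Sf_shape (α : ℝ) (δv : ℕ → ℝ) (s : List Bool) :
    (fun x => Sf α δv s x) = fun x =>
      (blv α δv s.length - slp α s * eps α δv s
        - slp α s * (1 - (1-α)/8) * rad α δv s)
      + slp α s * (1 - (1-α)/8) * |x - mid s| := by
  funext x; rw [Sf]; ring

lemma convex_V {α : ℝ} (hα0 : 0 < α) (δv : ℕ → ℝ) (s : List Bool) :
    ConvexOn ℝ Set.univ (fun x => V α δv s x) := by
  rw [V_shape]; exact convex_absLin _ _ _ (slp_pos hα0 s).le

lemma lipschitz_V {α : ℝ} (hα0 : 0 < α) (hα1 : α < 1) (δv : ℕ → ℝ) (s : List Bool) :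
    LipschitzWith 1 (fun x => V α δv s x) := by
  rw [V_shape]
  exact lipschitz_absLin _ _ _ (slp_pos hα0 s).le (slp_le_one hα0 hα1 s)

lemma mu_nonneg {α : ℝ} (hα0 : 0 < α) (hα1 : α < 1) (s : List Bool) :
    0 ≤ slp α s * (1 - (1-α)/8) := by
  have := slp_pos hα0 s; nlinarith

lemma mu_le_one {α : ℝ} (hα0 : 0 < α) (hα1 : α < 1) (s : List Bool) :
    slp α s * (1 - (1-α)/8) ≤ 1 := by
  have h1 := slp_pos hα0 s
  have h2 := slp_le_one hα0 hα1 s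
  nlinarith

lemma convex_Sf {α : ℝ} (hα0 : 0 < α) (hα1 : α < 1) (δv : ℕ → ℝ) (s : List Bool) :
    ConvexOn ℝ Set.univ (fun x => Sf α δv s x) := by
  rw [Sf_shape]; exact convex_absLin _ _ _ (mu_nonneg hα0 hα1 s)

lemma lipschitz_Sf {α : ℝ} (hα0 : 0 < α) (hα1 : α < 1) (δv : ℕ → ℝ) (s : List Bool) :
    LipschitzWith 1 (fun x => Sf α δv s x) := by
  rw [Sf_shape]
  exact lipschitz_absLin _ _ _ (mu_nonneg hα0 hα1 s) (mu_le_one hα0 hα1 s)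

lemma abs_shape : (fun x : ℝ => |x|) = fun x : ℝ => 0 + 1 * |x - 0| := by
  funext x; simp

lemma convex_f {α : ℝ} (hα0 : 0 < α) (hα1 : α < 1) (δv : ℕ → ℝ) (s : List Bool) :
    ConvexOn ℝ Set.univ (fun x => f α δv s x) := by
  induction s using List.reverseRecOn with
  | nil =>
    have : (fun x => f α δv [] x) = fun x : ℝ => |x| := by funext x; rw [f_nil]
    rw [this, abs_shape]; exact convex_absLin _ _ _ zero_le_one
  | append_singleton t b ih =>
    have he : (fun x => f α δv (t ++ [b]) x) = fun x =>
        max (f α δv t x) (max (Sf α δv t x) (V α δv (t ++ [b]) x)) := by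
      funext x; rw [f_concat]
    rw [he]
    exact ih.sup ((convex_Sf hα0 hα1 δv t).sup (convex_V hα0 δv (t ++ [b])))

lemma lipschitz_f {α : ℝ} (hα0 : 0 < α) (hα1 : α < 1) (δv : ℕ → ℝ) (s : List Bool) :
    LipschitzWith 1 (fun x => f α δv s x) := by
  induction s using List.reverseRecOn with
  | nil =>
    have : (fun x => f α δv [] x) = fun x : ℝ => |x| := by funext x; rw [f_nil]
    rw [this, abs_shape]; exact lipschitz_absLin _ _ _ zero_le_one le_rfl
  | append_singleton t b ih =>
    have he : (fun x => f α δv (t ++ [b]) x) = fun x =>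
        max (f α δv t x) (max (Sf α δv t x) (V α δv (t ++ [b]) x)) := by
      funext x; rw [f_concat]
    rw [he]
    have h2 := (lipschitz_Sf hα0 hα1 δv t).max (lipschitz_V hα0 hα1 δv (t ++ [b]))
    rw [sup_idem] at h2
    have h3 := ih.max h2
    rwa [sup_idem] at h3

/-! ### dependence on finitely many coordinates -/

lemma blv_congr {α : ℝ} {δv δv' : ℕ → ℝ} {l : ℕ} (h : ∀ i < l, δv i = δv' i) :
    blv α δv l = blv α δv' l := by
  unfold blv
  congr 1
  exact Finset.sum_congr rfl fun i hi => by rw [h i (Finset.mem_range.mp hi)]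

lemma f_congr {α : ℝ} {δv δv' : ℕ → ℝ} (s : List Bool)
    (h : ∀ i < s.length, δv i = δv' i) (x : ℝ) :
    f α δv s x = f α δv' s x := by
  induction s using List.reverseRecOn with
  | nil => rw [f_nil, f_nil]
  | append_singleton t b ih =>
    have hlen : (t ++ [b]).length = t.length + 1 := len_concat t b
    have ht : ∀ i < t.length, δv i = δv' i := fun i hi =>
      h i (by rw [hlen]; omega)
    have hbt : blv α δv t.length = blv α δv' t.length := blv_congr ht
    have hbs : blv α δv (t ++ [b]).length = blv α δv' (t ++ [b]).length :=
      blv_congr (by intro i hi; exact h i hi)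
    have hdt : δv t.length = δv' t.length := h t.length (by rw [hlen]; omega)
    rw [f_concat, f_concat, ih ht]
    congr 2
    · rw [Sf, Sf, hbt, rad, rad, eps, eps, hdt]
    · rw [V, V, hbs]

end PNem
end

/-- existence of the perturbed Nemirovski family on `[-1,1]`:
intervals `I_s` satisfying (F-1), (F-2) with `I_⊥ = [-1,1]`; functions
`f_{s,δ}` (depending only on the first `|s|` coordinates of `δ`), convex,
continuous, `1`-Lipschitz, with `f_{⊥,δ} = |·|`; values `b_{l,δ}` given by
`b_{0,δ} = 1`, `b_{l+1,δ} = b_{l,δ} - (α/2)(α/8)^l - δ_{l+1}`; satisfying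
(G-4), (G-5), and (G-3) with perturbed intervals `I_t^δ` depending only on `t`
and `δ_1, …, δ_{|t|+1}`. -/
theorem exists_perturbed_nemirovski_family (M : ℕ) (hM : 1 ≤ M)
    (α : ℝ) (hα0 : 0 < α) (hα1 : α < 1)
    (δbar : ℝ) (hδbar : δbar = (1 - α) / 4 * (α / 8) ^ M) :
    ∃ (lo hi : List Bool → ℝ)
      (f : List Bool → (Fin M → ℝ) → ℝ → ℝ)
      (b : ℕ → (Fin M → ℝ) → ℝ)
      (loP hiP : List Bool → (Fin M → ℝ) → ℝ),
      lo [] = -1 ∧ hi [] = 1 ∧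
      -- (F-1)
      (∀ s : List Bool, s.length ≤ M →
        hi s - lo s = 2 * (4:ℝ)⁻¹ ^ s.length) ∧
      -- (F-2)
      (∀ s t : List Bool, s.length ≤ M → t.length ≤ M → ¬ s <+: t → ¬ t <+: s →
        Set.Ioo (lo s) (hi s) ∩ Set.Ioo (lo t) (hi t) = ∅) ∧
      (∀ s t : List Bool, s.length ≤ M → t <+: s →
        Set.Icc (lo s) (hi s) ⊆ Set.Icc (lo t) (hi t)) ∧
      (∀ s : List Bool, s.length ≤ M →
        Set.Icc (lo s) (hi s) ⊆ Set.Icc (-1:ℝ) 1) ∧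
      -- the values b_{l,δ}
      (∀ δ : Fin M → ℝ, b 0 δ = 1) ∧
      (∀ δ : Fin M → ℝ, ∀ l : ℕ, ∀ hl : l < M,
        b (l + 1) δ = b l δ - α / 2 * (α / 8) ^ l - δ ⟨l, hl⟩) ∧
      -- the base function and the dependence of f_{s,δ} on δ
      (∀ (δ : Fin M → ℝ) (x : ℝ), f [] δ x = |x|) ∧
      (∀ s : List Bool, s.length ≤ M → ∀ δ δ' : Fin M → ℝ,
        (∀ i : Fin M, (i : ℕ) < s.length → δ i = δ' i) → f s δ = f s δ') ∧
      -- regularity of the members, for δ ∈ (0, δ̄]^M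
      (∀ s : List Bool, s.length ≤ M →
        ∀ δ : Fin M → ℝ, (∀ i, δ i ∈ Set.Ioc (0:ℝ) δbar) →
          ConvexOn ℝ (Set.Icc (-1:ℝ) 1) (f s δ) ∧
          ContinuousOn (f s δ) (Set.Icc (-1:ℝ) 1) ∧
          LipschitzOnWith 1 (f s δ) (Set.Icc (-1:ℝ) 1)) ∧
      -- (G-4)
      (∀ s : List Bool, s.length ≤ M →
        ∀ δ : Fin M → ℝ, (∀ i, δ i ∈ Set.Ioc (0:ℝ) δbar) →
          ∀ x ∈ Set.Icc (lo s) (hi s),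
            f s δ x = b s.length δ - (α / 8) ^ s.length +
              (α / 2) ^ s.length * |x - (lo s + hi s) / 2|) ∧
      -- (G-5)
      (∀ s : List Bool, s.length ≤ M → ∀ t : List Bool, t <+: s →
        ∀ δ : Fin M → ℝ, (∀ i, δ i ∈ Set.Ioc (0:ℝ) δbar) →
          ∀ x ∈ Set.Icc (-1:ℝ) 1,
            (f s δ x < b t.length δ ↔ x ∈ Set.Ioo (lo t) (hi t))) ∧
      -- the perturbed interval I_t^δ depends only on t and δ_1, …, δ_{|t|+1}
      (∀ t : List Bool, t.length < M → ∀ δ δ' : Fin M → ℝ,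
        (∀ i : Fin M, (i : ℕ) < t.length + 1 → δ i = δ' i) →
          loP t δ = loP t δ' ∧ hiP t δ = hiP t δ') ∧
      -- (G-3)
      (∀ s : List Bool, s.length ≤ M → ∀ t : List Bool, t <+: s → t ≠ s →
        ∀ δ : Fin M → ℝ, (∀ i, δ i ∈ Set.Ioc (0:ℝ) δbar) →
          (Set.Icc (lo (t ++ [false])) (hi (t ++ [false])) ∪
              Set.Icc (lo (t ++ [true])) (hi (t ++ [true])) ⊆
            Set.Ioo (loP t δ) (hiP t δ)) ∧
          (Set.Icc (loP t δ) (hiP t δ) ⊆ Set.Ioo (lo t) (hi t)) ∧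
          (∀ x ∈ Set.Icc (-1:ℝ) 1, f t δ x ≤ f s δ x) ∧
          (∀ x ∈ Set.Icc (-1:ℝ) 1,
            (f s δ x = f t δ x ↔ x ∉ Set.Ioo (loP t δ) (hiP t δ)))) := by
  classical
  set pad : (Fin M → ℝ) → ℕ → ℝ := fun δ i =>
    if h : i < M then δ ⟨i, h⟩ else (1 - α) / 4 * (α / 8) ^ (i + 1) with hpad
  have hDok : ∀ δ : Fin M → ℝ, (∀ i, δ i ∈ Set.Ioc (0:ℝ) δbar) → PNem.Dok α (pad δ) := by
    intro δ hδ n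
    by_cases h : n < M
    · have h1 := hδ ⟨n, h⟩
      rw [Set.mem_Ioc] at h1
      have hle : (α / 8) ^ M ≤ (α / 8) ^ (n + 1) :=
        pow_le_pow_of_le_one (by linarith) (by linarith) (by omega)
      constructor
      · simpa [hpad, h] using h1.1
      · have : δ ⟨n, h⟩ ≤ (1 - α) / 4 * (α / 8) ^ (n + 1) := by
          refine h1.2.trans ?_
          rw [hδbar]
          exact mul_le_mul_of_nonneg_left hle (by linarith)
        simpa [hpad, h] using this
    · constructor
      · simp only [hpad, h, dite_false]
        have h1 : (0:ℝ) < 1 - α := by linarith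
        positivity
      · simp [hpad, h]
  refine ⟨PNem.lo, PNem.hi, fun s δ x => PNem.f α (pad δ) s x,
    fun l δ => PNem.blv α (pad δ) l,
    fun t δ => PNem.mid t - PNem.rad α (pad δ) t,
    fun t δ => PNem.mid t + PNem.rad α (pad δ) t,
    rfl, rfl, ?_, ?_, ?_, ?_, ?_, ?_, ?_, ?_, ?_, ?_, ?_, ?_, ?_⟩
  · -- (F-1)
    intro s _
    simpa [PNem.hw] using PNem.hi_sub_lo s
  · -- (F-2) disjoint
    intro s t _ _ hs ht
    exact PNem.disjoint_incomp hs ht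
  · -- nesting
    intro s t _ h
    exact PNem.icc_subset_prefix h
  · -- inside [-1,1]
    intro s _
    have := PNem.icc_subset_prefix (List.nil_prefix (l := s))
    simpa [PNem.lo, PNem.hi] using this
  · -- b 0
    intro δ; exact PNem.blv_zero α (pad δ)
  · -- b recurrence
    intro δ l hl
    beta_reduce
    rw [PNem.blv_succ]
    congr 1
    simp [hpad, hl]
  · -- f at ⊥
    intro δ x; exact PNem.f_nil α (pad δ) x
  · -- dependence of f on the first coordinates
    intro s hs δ δ' hag
    funext x
    refine PNem.f_congr s (fun i hi => ?_) x
    have hiM : i < M := lt_of_lt_of_le hi hs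
    have := hag ⟨i, hiM⟩ (by simpa using hi)
    simpa [hpad, hiM] using this
  · -- regularity
    intro s _ δ hδ
    have hc := PNem.convex_f hα0 hα1 (pad δ) s
    have hl := PNem.lipschitz_f hα0 hα1 (pad δ) s
    refine ⟨hc.subset (Set.subset_univ _) (convex_Icc _ _),
      hl.continuous.continuousOn, ?_⟩
    exact LipschitzWith.lipschitzOnWith hl
  · -- (G-4)
    intro s _ δ hδ x hx
    beta_reduce
    rw [PNem.f_eq_V_on hα0 hα1 (hDok δ hδ) s x hx]
    rfl
  · -- (G-5)
    intro s _ t ht δ hδ x _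
    exact (PNem.f_lt_blv_iff hα0 hα1 (hDok δ hδ) ht x).trans
      (PNem.mem_ioo_iff t x).symm
  · -- dependence of the perturbed interval
    intro t htM δ δ' hag
    have h1 : pad δ t.length = pad δ' t.length := by
      have := hag ⟨t.length, htM⟩ (by simp)
      simpa [hpad, htM] using this
    have h2 : PNem.rad α (pad δ) t = PNem.rad α (pad δ') t := by
      rw [PNem.rad, PNem.rad, PNem.eps, PNem.eps, h1]
    exact ⟨by beta_reduce; rw [h2], by beta_reduce; rw [h2]⟩
  · -- (G-3)
    intro s _ t hts hne δ hδ
    have hD := hDok δ hδ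
    refine ⟨?_, ?_, ?_, ?_⟩
    · exact Set.union_subset (PNem.child_subset_P hα0 hα1 hD t false)
        (PNem.child_subset_P hα0 hα1 hD t true)
    · exact PNem.P_subset_I hα0 hα1 hD t
    · intro x _
      exact PNem.f_prefix_mono hts α (pad δ) x
    · intro x _
      constructor
      · intro heq hmem
        exact (PNem.f_lt_inside hα0 hα1 hD hts hne x hmem).ne' heq
      · intro hnot
        exact PNem.f_eq_outside hα0 hα1 hD hts x hnot
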